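/- Let {M_λ} be a family of nonzero R-modules all having the same annihilator p. Then the direct sum ⨁ M_λ is a coprime module if and only if each M_λ is a coprime module. -/

import Mathlib

/-!
Coprimality passes to quotients, hence to each summand, because a surjection can only enlarge
the annihilator. Conversely, let `I` be a two-sided ideal. If `I M_i = 0` for one `i`, then
`I ⊆ p`, so `I` kills every summand and hence the sum; otherwise `I M_i = M_i` for all `i`,
and the images of the summands generate `⨁ M_i`, so `I (⨁ M_i) = ⨁ M_i`.
-/

section Prelim

variable {R : Type*} [Ring R] {M : Type*} [AddCommGroup M] [Module R M]

/-- A left ideal of `R` is two-sided. -/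
def IsTwoSidedIdeal (I : Ideal R) : Prop := ∀ r ∈ I, ∀ s : R, r * s ∈ I

/-- `M` is a coprime module: `IM = M` or `IM = 0` for every two-sided ideal `I`. -/
def IsCoprimeModule (R M : Type*) [Ring R] [AddCommGroup M] [Module R M] : Prop :=
  ∀ I : Ideal R, IsTwoSidedIdeal I →
    I • (⊤ : Submodule R M) = ⊤ ∨ I • (⊤ : Submodule R M) = ⊥

/-- A proper submodule `K ⊊ M` is a coprime submodule of `M`:
`IM + K = M` or `IM ⊆ K` for every two-sided ideal `I`. -/
def IsCoprimeSubmodule (K : Submodule R M) : Prop :=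
  K ≠ ⊤ ∧ ∀ I : Ideal R, IsTwoSidedIdeal I →
    I • (⊤ : Submodule R M) ⊔ K = ⊤ ∨ I • (⊤ : Submodule R M) ≤ K

/-- A nonzero submodule `K ≤ M` is second: `IK = K` or `IK = 0`
for every two-sided ideal `I`. -/
def IsSecondSubmodule (K : Submodule R M) : Prop :=
  K ≠ ⊥ ∧ ∀ I : Ideal R, IsTwoSidedIdeal I → I • K = K ∨ I • K = ⊥

/-- The ideal `(K :_R M) = {r | r • M ⊆ K}`. -/
def colonIdeal (K : Submodule R M) : Ideal R where
  carrier := {r : R | ∀ m : M, r • m ∈ K}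
  zero_mem' := by intro m; rw [zero_smul]; exact K.zero_mem
  add_mem' := by intro a b ha hb m; rw [add_smul]; exact K.add_mem (ha m) (hb m)
  smul_mem' := by intro s r hr m; rw [smul_eq_mul, mul_smul]; exact K.smul_mem s (hr m)

/-- The annihilator `(0 :_M I)` of a two-sided ideal `I` in `M`. -/
def annSubmodule (I : Ideal R) (hI : IsTwoSidedIdeal I) : Submodule R M where
  carrier := {m : M | ∀ r ∈ I, r • m = 0}
  zero_mem' := by intro r _; exact smul_zero r
  add_mem' := by intro a b ha hb r hr; rw [smul_add, ha r hr, hb r hr, add_zero]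
  smul_mem' := by intro s m hm r hr; rw [← mul_smul]; exact hm _ (hI r hr s)

/-- A nonzero submodule `K` is strongly hollow in `M`. -/
def StronglyHollowIn (K : Submodule R M) : Prop :=
  K ≠ ⊥ ∧ ∀ L₁ L₂ : Submodule R M, K ≤ L₁ ⊔ L₂ → K ≤ L₁ ∨ K ≤ L₂

/-- A proper submodule `K` is strongly irreducible in `M`. -/
def StronglyIrreducibleIn (K : Submodule R M) : Prop :=
  K ≠ ⊤ ∧ ∀ L₁ L₂ : Submodule R M, L₁ ⊓ L₂ ≤ K → L₁ ≤ K ∨ L₂ ≤ K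

/-- `V^s(L)`: the second submodules of `M` contained in `L`. -/
def secondVariety (L : Submodule R M) : Set (Submodule R M) :=
  {K | IsSecondSubmodule K ∧ K ≤ L}

/-- `V^c(L)`: the coprime submodules of `M` containing `L`. -/
def coprimeVariety (L : Submodule R M) : Set (Submodule R M) :=
  {K | IsCoprimeSubmodule K ∧ L ≤ K}

lemma IsTwoSidedIdeal.inf {I J : Ideal R} (hI : IsTwoSidedIdeal I)
    (hJ : IsTwoSidedIdeal J) : IsTwoSidedIdeal (I ⊓ J) := by
  intro r hr s
  rw [Submodule.mem_inf] at hr ⊢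
  exact ⟨hI r hr.1 s, hJ r hr.2 s⟩

lemma IsTwoSidedIdeal.mul {I J : Ideal R} (hJ : IsTwoSidedIdeal J) :
    IsTwoSidedIdeal (I * J) := by
  intro r hr s
  refine Submodule.smul_induction_on hr ?_ ?_
  · intro a ha b hb
    rw [smul_eq_mul, mul_assoc]
    exact Ideal.mul_mem_mul ha (hJ b hb s)
  · intro x y hx hy
    rw [add_mul]
    exact Ideal.add_mem _ hx hy

end Prelim

section Coprime

variable {R : Type*} [Ring R] {M N : Type*} [AddCommGroup M] [Module R M]
  [AddCommGroup N] [Module R N] {I : Ideal R}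

theorem Submodule.smul_top_eq_bot_iff_le_annihilator :
    I • (⊤ : Submodule R M) = ⊥ ↔ I ≤ Module.annihilator R M := by
  rw [← Submodule.le_annihilator_iff, Submodule.annihilator_top]

theorem Submodule.smul_top_eq_top_of_surjective (f : M →ₗ[R] N) (hf : Function.Surjective f)
    (h : I • (⊤ : Submodule R M) = ⊤) : I • (⊤ : Submodule R N) = ⊤ := by
  rw [← LinearMap.range_eq_top.mpr hf, LinearMap.range_eq_map, ← Submodule.map_smul'', h]

theorem Submodule.smul_top_eq_top_of_iSup_range_eq_top {ι : Type*} {M : ι → Type*}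
    [∀ i, AddCommGroup (M i)] [∀ i, Module R (M i)] (f : ∀ i, M i →ₗ[R] N)
    (hf : ⨆ i, LinearMap.range (f i) = ⊤) (h : ∀ i, I • (⊤ : Submodule R (M i)) = ⊤) :
    I • (⊤ : Submodule R N) = ⊤ := by
  refine eq_top_iff.mpr (hf.symm.trans_le (iSup_le fun i => ?_))
  rw [LinearMap.range_eq_map, ← h i, Submodule.map_smul'']
  exact smul_mono_right I le_top

theorem IsCoprimeModule.of_surjective (hM : IsCoprimeModule R M) (f : M →ₗ[R] N)
    (hf : Function.Surjective f) : IsCoprimeModule R N := by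
  intro I hI
  refine (hM I hI).imp (Submodule.smul_top_eq_top_of_surjective f hf) fun hbot => ?_
  rw [Submodule.smul_top_eq_bot_iff_le_annihilator] at hbot ⊢
  exact hbot.trans (f.annihilator_le_of_surjective hf)

end Coprime

namespace DirectSum

variable {R : Type*} [Ring R] {ι : Type*} {M : ι → Type*} [∀ i, AddCommGroup (M i)]
  [∀ i, Module R (M i)] {I : Ideal R}

theorem annihilator_eq_iInf :
    Module.annihilator R (⨁ i, M i) = ⨅ i, Module.annihilator R (M i) :=
  Module.annihilator_dfinsupp

theorem smul_top_eq_top_of_forall (h : ∀ i, I • (⊤ : Submodule R (M i)) = ⊤) :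
    I • (⊤ : Submodule R (⨁ i, M i)) = ⊤ := by
  classical
  exact Submodule.smul_top_eq_top_of_iSup_range_eq_top (lof R ι M) DFinsupp.iSup_range_lsingle h

theorem isCoprimeModule_of_directSum [DecidableEq ι] (h : IsCoprimeModule R (⨁ i, M i)) (i : ι) :
    IsCoprimeModule R (M i) :=
  h.of_surjective (component R ι M i) fun m => ⟨lof R ι M i m, component.lof_self R i m⟩

end DirectSum

open DirectSum in
theorem statement10_general {R : Type*} [Ring R] {ι : Type*} (M : ι → Type*)
    [∀ i, AddCommGroup (M i)] [∀ i, Module R (M i)]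
    (p : Ideal R) (hp : ∀ i, Module.annihilator R (M i) = p) :
    IsCoprimeModule R (⨁ i, M i) ↔ ∀ i, IsCoprimeModule R (M i) := by
  classical
  refine ⟨isCoprimeModule_of_directSum, fun h I hI => ?_⟩
  by_cases hbot : ∃ i, I • (⊤ : Submodule R (M i)) = ⊥
  · obtain ⟨i, hi⟩ := hbot
    right
    rw [Submodule.smul_top_eq_bot_iff_le_annihilator] at hi ⊢
    rw [annihilator_eq_iInf]
    exact le_iInf fun j => by rw [hp j, ← hp i]; exact hi
  · push Not at hbot
    exact .inl <| smul_top_eq_top_of_forall fun i => (h i I hI).resolve_right (hbot i)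

open DirectSum in
/-- Let `{M i}` be a (nonempty) family of nonzero `R`-modules all having
the same annihilator `p`. Then `⨁ i, M i` is coprime iff each `M i` is coprime. -/
theorem statement10 {R : Type*} [Ring R] {ι : Type*} [Nonempty ι] (M : ι → Type*)
    [∀ i, AddCommGroup (M i)] [∀ i, Module R (M i)] [∀ i, Nontrivial (M i)]
    (p : Ideal R) (hp : ∀ i, Module.annihilator R (M i) = p) :
    IsCoprimeModule R (⨁ i, M i) ↔ ∀ i, IsCoprimeModule R (M i) :=
  statement10_general M p hp
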